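/- Let F : ℝ^p → ℝ be L-smooth with minimum F*. Run noisy gradient descent x_{k+1} = x_k − (1/L)(∇F(x_k) + z_k) for T steps with independent mean-zero noise of second moment pσ². If m is sampled uniformly from {0,...,T−1}, then E[‖∇F(x_m)‖²] ≤ 2L(F(x_0) − F*)/T + pσ². -/

import Mathlib

/-!
The descent lemma `f (y + v) ≤ f y + ⟪∇f y, v⟫ + L / 2 * ‖v‖ ^ 2`, applied to the noisy step
`v = -(∇f y + w) / L`, gives pointwise `‖∇f y‖ ^ 2 ≤ 2 L (f y - f (y + v)) + ‖w‖ ^ 2`: for this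
step size the cross term `⟪∇f y, w⟫` cancels. Taking expectations, the noise contributes
`E ‖z_k‖ ^ 2 = p σ ^ 2` per step, and summing over `k < T` telescopes the values `E F (x_k)`
down to `F (x_0) - E F (x_T) ≤ F (x_0) - F*`.
-/

open MeasureTheory ProbabilityTheory InnerProductSpace

open scoped NNReal

section Descent

variable {E : Type*} [NormedAddCommGroup E] [InnerProductSpace ℝ E] {f : E → ℝ} {f' : E → E}

theorem inner_sub_le_of_lipschitzWith {K : ℝ≥0} (hLip : LipschitzWith K f') (x v : E) {t : ℝ}
    (ht : 0 ≤ t) : ⟪f' (x + t • v) - f' x, v⟫_ℝ ≤ K * t * ‖v‖ ^ 2 :=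
  calc ⟪f' (x + t • v) - f' x, v⟫_ℝ
      ≤ ‖f' (x + t • v) - f' x‖ * ‖v‖ := real_inner_le_norm _ _
    _ ≤ K * ‖(x + t • v) - x‖ * ‖v‖ := by gcongr; exact hLip.norm_sub_le _ _
    _ = K * t * ‖v‖ ^ 2 := by
      rw [add_sub_cancel_left, norm_smul, Real.norm_of_nonneg ht]; ring

variable [CompleteSpace E]

theorem HasGradientAt.hasDerivAt_comp_add_smul {g x v : E} {t : ℝ}
    (h : HasGradientAt f g (x + t • v)) :
    HasDerivAt (fun s : ℝ => f (x + s • v)) ⟪g, v⟫_ℝ t := by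
  have hline : HasDerivAt (fun s : ℝ => x + s • v) v t := by
    simpa using ((hasDerivAt_id t).smul_const v).const_add x
  have := h.hasFDerivAt.comp_hasDerivAt t hline
  simp only [toDual_apply_apply] at this
  exact this

theorem apply_add_le_of_lipschitzWith_gradient {K : ℝ≥0} (hf : ∀ x, HasGradientAt f (f' x) x)
    (hLip : LipschitzWith K f') (x v : E) :
    f (x + v) ≤ f x + ⟪f' x, v⟫_ℝ + K / 2 * ‖v‖ ^ 2 := by
  set φ : ℝ → ℝ := fun t => f (x + t • v) - t * ⟪f' x, v⟫_ℝ - K / 2 * t ^ 2 * ‖v‖ ^ 2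
  have hφ : ∀ t, HasDerivAt φ (⟪f' (x + t • v) - f' x, v⟫_ℝ - K * t * ‖v‖ ^ 2) t := by
    intro t
    have := ((hf (x + t • v)).hasDerivAt_comp_add_smul.sub
      ((hasDerivAt_id t).mul_const ⟪f' x, v⟫_ℝ)).sub
      (((hasDerivAt_pow 2 t).const_mul (K / 2 : ℝ)).mul_const (‖v‖ ^ 2))
    exact this.congr_deriv (by rw [inner_sub_left]; push_cast; ring)
  have hanti : AntitoneOn φ (Set.Icc 0 1) := by
    refine antitoneOn_of_hasDerivWithinAt_nonpos (convex_Icc 0 1)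
      (fun t _ => (hφ t).continuousAt.continuousWithinAt) (fun t _ => (hφ t).hasDerivWithinAt)
      fun t ht => ?_
    rw [interior_Icc] at ht
    exact sub_nonpos.2 (inner_sub_le_of_lipschitzWith hLip x v ht.1.le)
  have := hanti (Set.left_mem_Icc.2 zero_le_one) (Set.right_mem_Icc.2 zero_le_one) zero_le_one
  simp only [φ, zero_smul, one_smul, add_zero, zero_mul, one_mul, sub_zero, mul_one,
    one_pow, ne_eq, OfNat.ofNat_ne_zero, not_false_eq_true, zero_pow, mul_zero] at this
  linarith

theorem sq_norm_gradient_le_of_noisy_gradient_step {L : ℝ} (hL : 0 < L)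
    (hf : ∀ x, HasGradientAt f (f' x) x) (hLip : LipschitzWith L.toNNReal f') (y w : E) :
    ‖f' y‖ ^ 2 ≤ 2 * L * (f y - f (y - (1 / L) • (f' y + w))) + ‖w‖ ^ 2 := by
  set v := -((1 / L) • (f' y + w))
  have hdescent := apply_add_le_of_lipschitzWith_gradient hf hLip y v
  rw [Real.coe_toNNReal L hL.le, ← sub_eq_add_neg] at hdescent
  have hcancel : 2 * L * (⟪f' y, v⟫_ℝ + L / 2 * ‖v‖ ^ 2) = ‖w‖ ^ 2 - ‖f' y‖ ^ 2 := by
    rw [inner_neg_right, real_inner_smul_right, norm_neg, norm_smul, mul_pow, norm_add_sq_real,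
      Real.norm_eq_abs, sq_abs, inner_add_right, real_inner_self_eq_norm_sq]
    field_simp
    ring
  nlinarith [mul_le_mul_of_nonneg_left hdescent (by positivity : 0 ≤ 2 * L)]

end Descent

theorem one_div_mul_sum_range_le_of_le_telescoping {g a : ℕ → ℝ} {C c m : ℝ} {T : ℕ}
    (hC : 0 ≤ C) (hc : 0 ≤ c) (hg : ∀ k, g k ≤ C * (a k - a (k + 1)) + c) (hm : m ≤ a T) :
    (1 / (T : ℝ)) * ∑ k ∈ Finset.range T, g k ≤ C * (a 0 - m) / T + c := by
  have hsum : ∑ k ∈ Finset.range T, g k ≤ C * (a 0 - m) + T * c :=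
    calc ∑ k ∈ Finset.range T, g k
        ≤ ∑ k ∈ Finset.range T, (C * (a k - a (k + 1)) + c) := Finset.sum_le_sum fun k _ => hg k
      _ = C * (a 0 - a T) + T * c := by
        rw [Finset.sum_add_distrib, ← Finset.mul_sum, Finset.sum_range_sub', Finset.sum_const,
          Finset.card_range, nsmul_eq_mul]
      _ ≤ C * (a 0 - m) + T * c := by gcongr
  calc (1 / (T : ℝ)) * ∑ k ∈ Finset.range T, g k
      ≤ (1 / (T : ℝ)) * (C * (a 0 - m) + T * c) := by gcongr
    -- `T / T` rather than `1`, since `T` may be `0`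
    _ = C * (a 0 - m) / T + (T / T) * c := by ring
    _ ≤ C * (a 0 - m) / T + c := by
      gcongr
      exact mul_le_of_le_one_left hc (div_self_le_one _)

theorem noisy_gd_random_index_grad_bound_general {p : ℕ} {Ω : Type*} [MeasureSpace Ω]
    [IsProbabilityMeasure (ℙ : Measure Ω)]
    (L σ Fstar : ℝ) (hL : 0 < L)
    (F : EuclideanSpace ℝ (Fin p) → ℝ)
    (gradF : EuclideanSpace ℝ (Fin p) → EuclideanSpace ℝ (Fin p))
    (hdiff : ∀ x, HasGradientAt F (gradF x) x)
    (hLip : LipschitzWith (Real.toNNReal L) gradF)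
    (hmin : ∀ x, Fstar ≤ F x)
    (T : ℕ)
    (x z : ℕ → Ω → EuclideanSpace ℝ (Fin p)) (x0 : EuclideanSpace ℝ (Fin p))
    (hx0 : ∀ ω, x 0 ω = x0)
    (hupd : ∀ k ω, x (k + 1) ω = x k ω - (1 / L) • (gradF (x k ω) + z k ω))
    (hvar : ∀ k, (∫ ω, ‖z k ω‖ ^ 2) = p * σ ^ 2)
    (hintF : ∀ k, Integrable (fun ω => F (x k ω)))
    (hintg : ∀ k, Integrable (fun ω => ‖gradF (x k ω)‖ ^ 2))
    (hintz2 : ∀ k, Integrable (fun ω => ‖z k ω‖ ^ 2)) :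
    (1 / (T : ℝ)) * ∑ k ∈ Finset.range T, (∫ ω, ‖gradF (x k ω)‖ ^ 2) ≤
      2 * L * (F x0 - Fstar) / T + p * σ ^ 2 := by
  have hstep : ∀ k, ∫ ω, ‖gradF (x k ω)‖ ^ 2 ≤
      2 * L * ((∫ ω, F (x k ω)) - ∫ ω, F (x (k + 1) ω)) + p * σ ^ 2 := by
    intro k
    have hdecrease : Integrable fun ω => 2 * L * (F (x k ω) - F (x (k + 1) ω)) :=
      ((hintF k).sub (hintF (k + 1))).const_mul (2 * L)
    calc ∫ ω, ‖gradF (x k ω)‖ ^ 2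
        ≤ ∫ ω, 2 * L * (F (x k ω) - F (x (k + 1) ω)) + ‖z k ω‖ ^ 2 :=
          integral_mono (hintg k) (hdecrease.add (hintz2 k)) fun ω => by
            simpa only [← hupd k ω] using
              sq_norm_gradient_le_of_noisy_gradient_step hL hdiff hLip (x k ω) (z k ω)
      _ = 2 * L * ((∫ ω, F (x k ω)) - ∫ ω, F (x (k + 1) ω)) + p * σ ^ 2 := by
          rw [integral_add hdecrease (hintz2 k), integral_const_mul,
            integral_sub (hintF k) (hintF (k + 1)), hvar k]
  have hstart : ∫ ω, F (x 0 ω) = F x0 := by simp [hx0]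
  have hbelow : Fstar ≤ ∫ ω, F (x T ω) := by
    simpa using integral_mono (integrable_const Fstar) (hintF T) fun ω => hmin (x T ω)
  simpa only [hstart] using
    one_div_mul_sum_range_le_of_le_telescoping (by positivity) (by positivity) hstep hbelow

theorem noisy_gd_random_index_grad_bound {p : ℕ} {Ω : Type*} [MeasureSpace Ω]
    [IsProbabilityMeasure (ℙ : Measure Ω)]
    (L σ Fstar : ℝ) (hL : 0 < L)
    (F : EuclideanSpace ℝ (Fin p) → ℝ)
    (gradF : EuclideanSpace ℝ (Fin p) → EuclideanSpace ℝ (Fin p))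
    (hdiff : ∀ x, HasGradientAt F (gradF x) x)
    (hLip : LipschitzWith (Real.toNNReal L) gradF)
    (hmin : ∀ x, Fstar ≤ F x) (hattain : ∃ x, F x = Fstar)
    (T : ℕ) (hT : 0 < T)
    (x z : ℕ → Ω → EuclideanSpace ℝ (Fin p)) (x0 : EuclideanSpace ℝ (Fin p))
    (hx0 : ∀ ω, x 0 ω = x0)
    (hxm : ∀ k, Measurable (x k)) (hzm : ∀ k, Measurable (z k))
    (hupd : ∀ k ω, x (k + 1) ω = x k ω - (1 / L) • (gradF (x k ω) + z k ω))
    (hindep : ∀ k, IndepFun (x k) (z k))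
    (hmean : ∀ k, (∫ ω, z k ω) = 0) (hvar : ∀ k, (∫ ω, ‖z k ω‖ ^ 2) = p * σ ^ 2)
    (hintF : ∀ k, Integrable (fun ω => F (x k ω)))
    (hintg : ∀ k, Integrable (fun ω => ‖gradF (x k ω)‖ ^ 2))
    (hintz : ∀ k, Integrable (z k)) (hintz2 : ∀ k, Integrable (fun ω => ‖z k ω‖ ^ 2)) :
    (1 / (T : ℝ)) * ∑ k ∈ Finset.range T, (∫ ω, ‖gradF (x k ω)‖ ^ 2) ≤
      2 * L * (F x0 - Fstar) / T + p * σ ^ 2 :=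
  noisy_gd_random_index_grad_bound_general L σ Fstar hL F gradF hdiff hLip hmin T x z x0 hx0 hupd
    hvar hintF hintg hintz2
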